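/- arXiv:1506.06459 — 4 statements merged into one kernel-verified Lean document; each statement's English description precedes it below -/
import Mathlib

section
/- Let X be a Hausdorff topological space with a continuous action of the circle group S¹ = {λ ∈ ℂ : |λ| = 1}. Let ε₁ > 0, let B = {z ∈ ℂ^{n-1} : |z| < ε₁}, and let F : B → X be a continuous injective map with x₀ := F(0). Assume: (i) the stabilizer of x₀ in S¹ is trivial; (ii) there exists δ ∈ (0, π) such that e^{iθ}·F(z₁) ≠ F(z₂) for all real θ with 0 < |θ| < δ and all z₁, z₂ ∈ B. Then there exists ε₀ ∈ (0, ε₁) such that the map (z, θ) ↦ e^{iθ}·F(z) is injective on {z ∈ ℂ^{n-1} : |z| < ε₀} × (−π, π). -/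
/-- Extension of canonical coordinates around a regular point of a
continuous circle action on a Hausdorff space to angular width `2π`: if `F` is a
continuous injective map of a ball `B ⊆ ℂ^{n-1}` into `X` with `F 0 = x₀` of trivial
stabilizer, and `e^{iθ} • F z₁ ≠ F z₂` for all `0 < |θ| < δ` (some `δ ∈ (0, π)`) and
`z₁, z₂ ∈ B`, then `(z, θ) ↦ e^{iθ} • F z` is injective on a smaller ball times `(-π, π)`. -/
theorem circle_action_canonical_coordinates_regular
    {X : Type*} [TopologicalSpace X] [T2Space X]
    [MulAction Circle X] [ContinuousSMul Circle X]
    (n : ℕ) (ε₁ : ℝ) (hε₁ : 0 < ε₁)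
    (F : EuclideanSpace ℂ (Fin (n - 1)) → X)
    (hFc : ContinuousOn F (Metric.ball 0 ε₁))
    (hFi : Set.InjOn F (Metric.ball 0 ε₁))
    (hstab : ∀ g : Circle, g • F 0 = F 0 → g = 1)
    (δ : ℝ) (hδ0 : 0 < δ) (hδπ : δ < Real.pi)
    (hsep : ∀ θ : ℝ, 0 < |θ| → |θ| < δ →
      ∀ z₁ ∈ Metric.ball (0 : EuclideanSpace ℂ (Fin (n - 1))) ε₁,
        ∀ z₂ ∈ Metric.ball (0 : EuclideanSpace ℂ (Fin (n - 1))) ε₁,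
          Circle.exp θ • F z₁ ≠ F z₂) :
    ∃ ε₀ : ℝ, 0 < ε₀ ∧ ε₀ < ε₁ ∧
      Set.InjOn (fun p : EuclideanSpace ℂ (Fin (n - 1)) × ℝ => Circle.exp p.2 • F p.1)
        (Metric.ball 0 ε₀ ×ˢ Set.Ioo (-Real.pi) Real.pi) := by
  have hπ : (0:ℝ) < Real.pi := Real.pi_pos
  set r : ℝ := ε₁ / 2 with hrdef
  have hr0 : 0 < r := by positivity
  have hrε : r < ε₁ := by rw [hrdef]; linarith
  have hsub : Metric.closedBall (0:EuclideanSpace ℂ (Fin (n - 1))) r ⊆ Metric.ball 0 ε₁ :=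
    Metric.closedBall_subset_ball hrε
  -- the compact set of "bad" group elements
  set K : Set Circle := Circle.exp '' Set.Icc δ (2 * Real.pi - δ) with hKdef
  have hKc : IsCompact K := isCompact_Icc.image Circle.exp.continuous
  have h1K : (1 : Circle) ∉ K := by
    rintro ⟨θ, ⟨h1, h2⟩, hθ1⟩
    rw [Circle.exp_eq_one] at hθ1
    obtain ⟨k, rfl⟩ := hθ1
    have hk0 : (0:ℝ) < k := by nlinarith
    have hk1 : (k:ℝ) < 1 := by nlinarith
    have hk0' : (0:ℤ) < k := by exact_mod_cast hk0
    have hk1' : (k:ℤ) < 1 := by exact_mod_cast hk1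
    omega
  -- the "bad" set
  set C : Set (Circle × EuclideanSpace ℂ (Fin (n - 1)) × EuclideanSpace ℂ (Fin (n - 1))) :=
    K ×ˢ (Metric.closedBall 0 r ×ˢ Metric.closedBall 0 r) with hCdef
  have hCc : IsCompact C :=
    hKc.prod ((isCompact_closedBall _ _).prod (isCompact_closedBall _ _))
  set f : Circle × EuclideanSpace ℂ (Fin (n - 1)) × EuclideanSpace ℂ (Fin (n - 1)) → X × X := fun p => (p.1 • F p.2.1, F p.2.2) with hfdef
  have hfc : ContinuousOn f C := by
    apply ContinuousOn.prodMk
    · apply ContinuousOn.smul continuous_fst.continuousOn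
      exact hFc.comp (continuous_fst.comp continuous_snd).continuousOn
        (fun p (hp : p ∈ C) => hsub hp.2.1)
    · exact hFc.comp (continuous_snd.comp continuous_snd).continuousOn
        (fun p (hp : p ∈ C) => hsub hp.2.2)
  set A : Set (Circle × EuclideanSpace ℂ (Fin (n - 1)) × EuclideanSpace ℂ (Fin (n - 1))) := C ∩ f ⁻¹' Set.diagonal X with hAdef
  have hAcl : IsClosed A :=
    hfc.preimage_isClosed_of_isClosed hCc.isClosed isClosed_diagonal
  have hAc : IsCompact A := hCc.of_isClosed_subset hAcl Set.inter_subset_left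
  -- obtain a lower bound on the z-size of points in A
  obtain ⟨m, hm0, hmr, hmA⟩ :
      ∃ m : ℝ, 0 < m ∧ m ≤ r ∧ ∀ p ∈ A, m ≤ max ‖p.2.1‖ ‖p.2.2‖ := by
    rcases A.eq_empty_or_nonempty with hAe | hAne
    · exact ⟨r, hr0, le_refl r, by simp [hAe]⟩
    · have hφ : ContinuousOn (fun p : Circle × EuclideanSpace ℂ (Fin (n - 1)) × EuclideanSpace ℂ (Fin (n - 1)) => max ‖p.2.1‖ ‖p.2.2‖) A := by
        fun_prop
      obtain ⟨p₀, hp₀A, hp₀min⟩ := hAc.exists_isMinOn hAne hφ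
      refine ⟨max ‖p₀.2.1‖ ‖p₀.2.2‖, ?_, ?_, fun p hp => hp₀min hp⟩
      · rcases lt_or_ge 0 (max ‖p₀.2.1‖ ‖p₀.2.2‖) with h | h
        · exact h
        · exfalso
          have h1 : ‖p₀.2.1‖ = 0 := le_antisymm (le_trans (le_max_left _ _) h) (norm_nonneg _)
          have h2 : ‖p₀.2.2‖ = 0 := le_antisymm (le_trans (le_max_right _ _) h) (norm_nonneg _)
          rw [norm_eq_zero] at h1 h2
          have hdiag : p₀.1 • F p₀.2.1 = F p₀.2.2 := hp₀A.2
          rw [h1, h2] at hdiag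
          exact h1K (hstab p₀.1 hdiag ▸ hp₀A.1.1)
      · have := hp₀A.1.2.1
        rw [Metric.mem_closedBall, dist_zero_right] at this
        have h2 := hp₀A.1.2.2
        rw [Metric.mem_closedBall, dist_zero_right] at h2
        exact max_le this h2
  refine ⟨m, hm0, lt_of_le_of_lt hmr hrε, ?_⟩
  rintro ⟨z₁, θ₁⟩ ⟨hz₁, hθ₁⟩ ⟨z₂, θ₂⟩ ⟨hz₂, hθ₂⟩ heq
  simp only at heq hz₁ hz₂ hθ₁ hθ₂
  have hz₁n : ‖z₁‖ < m := by rwa [Metric.mem_ball, dist_zero_right] at hz₁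
  have hz₂n : ‖z₂‖ < m := by rwa [Metric.mem_ball, dist_zero_right] at hz₂
  have hz₁ε : z₁ ∈ Metric.ball (0:EuclideanSpace ℂ (Fin (n - 1))) ε₁ := by
    rw [Metric.mem_ball, dist_zero_right]; linarith
  have hz₂ε : z₂ ∈ Metric.ball (0:EuclideanSpace ℂ (Fin (n - 1))) ε₁ := by
    rw [Metric.mem_ball, dist_zero_right]; linarith
  -- reduce to a single angle
  have key : Circle.exp (θ₁ - θ₂) • F z₁ = F z₂ := by
    have : Circle.exp (θ₁ - θ₂) = (Circle.exp θ₂)⁻¹ * Circle.exp θ₁ := by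
      rw [← Circle.exp_neg, ← Circle.exp_add]; ring_nf
    rw [this, mul_smul, heq, inv_smul_smul]
  set θ := θ₁ - θ₂ with hθdef
  have hθlt : |θ| < 2 * Real.pi := by
    rw [abs_lt]
    constructor <;> [nlinarith [hθ₁.1, hθ₂.2]; nlinarith [hθ₁.2, hθ₂.1]]
  by_cases hθ0 : θ = 0
  · have hθeq : θ₁ = θ₂ := by rw [hθdef] at hθ0; linarith [sub_eq_zero.mp hθ0]
    have : F z₁ = F z₂ := by rw [hθ0, Circle.exp_zero, one_smul] at key; exact key
    have := hFi hz₁ε hz₂ε this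
    simp [this, hθeq]
  · exfalso
    have hθpos : 0 < |θ| := abs_pos.mpr hθ0
    rcases lt_or_ge |θ| δ with hcase1 | hcase1
    · exact hsep θ hθpos hcase1 z₁ hz₁ε z₂ hz₂ε key
    rcases le_or_gt |θ| (2 * Real.pi - δ) with hcase2 | hcase2
    · -- exp θ ∈ K, contradiction with m
      have hKmem : Circle.exp θ ∈ K := by
        rcases le_or_gt 0 θ with hpos | hneg
        · exact ⟨θ, ⟨by rwa [abs_of_nonneg hpos] at hcase1,
            by rwa [abs_of_nonneg hpos] at hcase2⟩, rfl⟩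
        · refine ⟨θ + 2 * Real.pi, ⟨?_, ?_⟩, Circle.exp_add_two_pi θ⟩
          · rw [abs_of_neg hneg] at hcase2; linarith
          · rw [abs_of_neg hneg] at hcase1; linarith
      have hmemA : (Circle.exp θ, z₁, z₂) ∈ A := by
        refine ⟨⟨hKmem, ?_, ?_⟩, key⟩
        · rw [Metric.mem_closedBall, dist_zero_right]; linarith
        · rw [Metric.mem_closedBall, dist_zero_right]; linarith
      have := hmA _ hmemA
      simp only at this
      rcases max_cases ‖z₁‖ ‖z₂‖ with ⟨h, _⟩ | ⟨h, _⟩ <;> rw [h] at this <;> linarith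
    · -- |θ| near 2π : shift by 2π
      rcases le_or_gt 0 θ with hpos | hneg
      · have habs : θ = |θ| := (abs_of_nonneg hpos).symm
        have h1 : 0 < |θ - 2 * Real.pi| := by rw [abs_pos]; nlinarith
        have h2 : |θ - 2 * Real.pi| < δ := by
          rw [abs_sub_lt_iff]; constructor <;> nlinarith
        exact hsep _ h1 h2 z₁ hz₁ε z₂ hz₂ε (by rwa [Circle.exp_sub_two_pi])
      · have habs : θ = -|θ| := by rw [abs_of_neg hneg]; ring
        have h1 : 0 < |θ + 2 * Real.pi| := by rw [abs_pos]; nlinarith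
        have h2 : |θ + 2 * Real.pi| < δ := by
          rw [abs_lt]; constructor <;> nlinarith
        exact hsep _ h1 h2 z₁ hz₁ε z₂ hz₂ε (by rwa [Circle.exp_add_two_pi])
end

section
/- Let X be a Hausdorff topological space with a continuous action of the circle group S¹ = {λ ∈ ℂ : |λ| = 1}, and let k ∈ ℕ, k ≥ 1. Let ε₁ > 0, let B = {z ∈ ℂ^{n-1} : |z| < ε₁}, and let F : B → X be a continuous injective map with x₀ := F(0). Assume: (i) the stabilizer of x₀ in S¹ is exactly the group of k-th roots of unity; (ii) there exists δ ∈ (0, π/k) such that e^{iθ}·F(z₁) ≠ F(z₂) for all real θ with 0 < |θ| < δ and all z₁, z₂ ∈ B. Then for every sufficiently small ϵ > 0 there exists ε₀ ∈ (0, ε₁) such that the map (z, θ) ↦ e^{iθ}·F(z) is injective on {z ∈ ℂ^{n-1} : |z| < ε₀} × (−π/k + ϵ, π/k − ϵ). -/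
/-!
Two points `e^{iθ₁}·F(z₁) = e^{iθ₂}·F(z₂)` of the image give `e^{iθ}·F(z₁) = F(z₂)` with
`θ = θ₁ - θ₂` and `|θ| < 2(π/k - ϵ) < 2π/k`. For `θ = 0` injectivity of `F` applies and for
`0 < |θ| < δ` the separation hypothesis. The remaining angles `δ ≤ |θ| ≤ 2(π/k - ϵ)` form a
compact set on which `e^{iθ}` is not a `k`-th root of unity, hence moves `F(0)`; by compactness
and the Hausdorff property one neighbourhood `U` of `F(0)` satisfies `e^{iθ}·U ∩ U = ∅` for all
of them at once, and `ε₀` is chosen so that `F` maps the `ε₀`-ball into `U`.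
-/

open Set Filter Topology Real

theorem exists_mem_nhds_forall_smul_ne_of_isCompact {G X : Type*} [TopologicalSpace G]
    [TopologicalSpace X] [T2Space X] [SMul G X] [ContinuousSMul G X] {K : Set G}
    (hK : IsCompact K) {x : X} (hx : ∀ g ∈ K, g • x ≠ x) :
    ∃ U ∈ 𝓝 x, ∀ g ∈ K, ∀ u ∈ U, ∀ v ∈ U, g • u ≠ v := by
  have hne : ∀ g ∈ K, ∀ᶠ q : (X × X) × G in 𝓝 ((x, x), g), q.2 • q.1.1 ≠ q.1.2 := fun g hg ↦
    (isOpen_ne_fun (continuous_snd.smul (continuous_fst.comp continuous_fst))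
      (continuous_snd.comp continuous_fst)).mem_nhds (hx g hg)
  have hnear := hK.eventually_forall_of_forall_eventually
    (P := fun (p : X × X) (g : G) ↦ g • p.1 ≠ p.2) hne
  rw [nhds_prod_eq, eventually_prod_self_iff'] at hnear
  obtain ⟨U, hU, hsep⟩ := hnear
  exact ⟨U, hU, fun g hg u hu v hv ↦ hsep u hu v hv g hg⟩

theorem Circle.exp_pow_ne_one {θ : ℝ} {k : ℕ} (hθ0 : θ ≠ 0) (hθ : |θ| < 2 * π / k) :
    Circle.exp θ ^ k ≠ 1 := by
  rw [← Circle.exp_natCast_mul, ne_eq, Circle.exp_eq_one]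
  rintro ⟨m, hm⟩
  have hk : (0 : ℝ) < k := by
    rcases k.eq_zero_or_pos with rfl | hk
    · simp only [CharP.cast_eq_zero, div_zero] at hθ
      linarith [abs_nonneg θ]
    · exact_mod_cast hk
  have hkθ : |(k : ℝ) * θ| < 2 * π := by
    rw [abs_mul, Nat.abs_cast, ← lt_div_iff₀' hk]
    exact hθ
  rw [hm, abs_mul, abs_of_pos two_pi_pos, mul_lt_iff_lt_one_left two_pi_pos, ← Int.cast_abs,
    ← Int.cast_one, Int.cast_lt, Int.abs_lt_one_iff] at hkθ
  subst hkθ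
  simp only [Int.cast_zero, zero_mul, mul_eq_zero] at hm
  exact hm.elim hk.ne' hθ0

theorem Circle.exp_smul_ne_self_of_fixed_pow_eq_one {X : Type*} [MulAction Circle X] {x : X} {k : ℕ}
    (hstab : ∀ g : Circle, g • x = x → g ^ k = 1) {θ : ℝ} (hθ0 : θ ≠ 0)
    (hθ : |θ| < 2 * π / k) : Circle.exp θ • x ≠ x :=
  fun hfix ↦ Circle.exp_pow_ne_one hθ0 hθ (hstab _ hfix)

theorem injOn_circleExp_smul_prod_Ioo {Z X : Type*} [MulAction Circle X] {F : Z → X}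
    {S : Set Z} {a b : ℝ} (hF : InjOn F S)
    (hsep : ∀ θ : ℝ, 0 < |θ| → |θ| < b - a → ∀ z₁ ∈ S, ∀ z₂ ∈ S, Circle.exp θ • F z₁ ≠ F z₂) :
    InjOn (fun p : Z × ℝ ↦ Circle.exp p.2 • F p.1) (S ×ˢ Ioo a b) := by
  rintro ⟨z₁, θ₁⟩ ⟨hz₁, hθ₁⟩ ⟨z₂, θ₂⟩ ⟨hz₂, hθ₂⟩ heq
  have hdiff : Circle.exp (θ₁ - θ₂) • F z₁ = F z₂ := by
    rw [Circle.exp_sub, div_eq_inv_mul, mul_smul]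
    exact inv_smul_eq_iff.mpr heq
  rcases eq_or_ne θ₁ θ₂ with rfl | hne
  · rw [sub_self, Circle.exp_zero, one_smul] at hdiff
    exact congrArg (·, θ₁) (hF hz₁ hz₂ hdiff)
  · refine absurd hdiff (hsep _ (abs_pos.mpr (sub_ne_zero.mpr hne)) ?_ z₁ hz₁ z₂ hz₂)
    rw [abs_sub_lt_iff]
    constructor <;> linarith [hθ₁.1, hθ₁.2, hθ₂.1, hθ₂.2]

theorem circle_action_canonical_coordinates_stratum_general
    {X : Type*} [TopologicalSpace X] [T2Space X]
    [MulAction Circle X] [ContinuousSMul Circle X]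
    (k : ℕ)
    (n : ℕ) (ε₁ : ℝ) (hε₁ : 0 < ε₁)
    (F : EuclideanSpace ℂ (Fin (n - 1)) → X)
    (hFc : ContinuousOn F (Metric.ball 0 ε₁))
    (hFi : Set.InjOn F (Metric.ball 0 ε₁))
    (hstab : {g : Circle | g • F 0 = F 0} = {g : Circle | g ^ k = 1})
    (δ : ℝ) (hδ0 : 0 < δ)
    (hsep : ∀ θ : ℝ, 0 < |θ| → |θ| < δ →
      ∀ z₁ ∈ Metric.ball (0 : EuclideanSpace ℂ (Fin (n - 1))) ε₁,
        ∀ z₂ ∈ Metric.ball (0 : EuclideanSpace ℂ (Fin (n - 1))) ε₁,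
          Circle.exp θ • F z₁ ≠ F z₂) :
    ∀ ϵ : ℝ, 0 < ϵ → ϵ < Real.pi / k →
      ∃ ε₀ : ℝ, 0 < ε₀ ∧ ε₀ < ε₁ ∧
        Set.InjOn (fun p : EuclideanSpace ℂ (Fin (n - 1)) × ℝ => Circle.exp p.2 • F p.1)
          (Metric.ball 0 ε₀ ×ˢ Set.Ioo (-(Real.pi / k) + ϵ) (Real.pi / k - ϵ)) := by
  intro ϵ hϵ _
  set M := 2 * (π / k - ϵ) with hMdef
  have hM : M < 2 * π / k := by rw [hMdef, mul_sub, mul_div_assoc]; linarith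
  set A : Set ℝ := Icc (-M) M ∩ {θ | δ ≤ |θ|}
  have hA : IsCompact A := isCompact_Icc.inter_right (isClosed_le continuous_const continuous_abs)
  have hmoved : ∀ g ∈ Circle.exp '' A, g • F 0 ≠ F 0 := by
    rintro _ ⟨θ, ⟨hθM, hδθ⟩, rfl⟩
    exact Circle.exp_smul_ne_self_of_fixed_pow_eq_one (fun g hg ↦ (hstab.subset hg : g ^ k = 1))
      (abs_pos.mp (hδ0.trans_le hδθ)) ((abs_le.mpr hθM).trans_lt hM)
  obtain ⟨U, hU, hUsep⟩ :=
    exists_mem_nhds_forall_smul_ne_of_isCompact (hA.image Circle.exp.continuous) hmoved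
  have hball : Metric.ball 0 ε₁ ∈ 𝓝 (0 : EuclideanSpace ℂ (Fin (n - 1))) :=
    Metric.ball_mem_nhds 0 hε₁
  obtain ⟨r, hr, hrU⟩ := Metric.mem_nhds_iff.mp
    (inter_mem ((hFc.continuousAt hball).preimage_mem_nhds hU) hball)
  have hsub : Metric.ball 0 (min r (ε₁ / 2)) ⊆ F ⁻¹' U ∩ Metric.ball 0 ε₁ :=
    (Metric.ball_subset_ball (min_le_left _ _)).trans hrU
  refine ⟨min r (ε₁ / 2), by positivity, (min_le_right _ _).trans_lt (half_lt_self hε₁),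
    injOn_circleExp_smul_prod_Ioo (hFi.mono (hsub.trans inter_subset_right)) ?_⟩
  intro θ hθ0 hθ z₁ hz₁ z₂ hz₂
  rcases lt_or_ge |θ| δ with hδθ | hδθ
  · exact hsep θ hθ0 hδθ z₁ (hsub hz₁).2 z₂ (hsub hz₂).2
  · exact hUsep _ ⟨θ, ⟨abs_le.mp (by linarith), hδθ⟩, rfl⟩ _ (hsub hz₁).1 _ (hsub hz₂).1

/-- Extension of canonical coordinates around a point of the stratum
`X_k` (stabilizer exactly the `k`-th roots of unity) of a continuous circle action on a
Hausdorff space to angular width almost `2π/k`. -/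
theorem circle_action_canonical_coordinates_stratum
    {X : Type*} [TopologicalSpace X] [T2Space X]
    [MulAction Circle X] [ContinuousSMul Circle X]
    (k : ℕ) (hk : 1 ≤ k)
    (n : ℕ) (ε₁ : ℝ) (hε₁ : 0 < ε₁)
    (F : EuclideanSpace ℂ (Fin (n - 1)) → X)
    (hFc : ContinuousOn F (Metric.ball 0 ε₁))
    (hFi : Set.InjOn F (Metric.ball 0 ε₁))
    (hstab : {g : Circle | g • F 0 = F 0} = {g : Circle | g ^ k = 1})
    (δ : ℝ) (hδ0 : 0 < δ) (hδπ : δ < Real.pi / k)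
    (hsep : ∀ θ : ℝ, 0 < |θ| → |θ| < δ →
      ∀ z₁ ∈ Metric.ball (0 : EuclideanSpace ℂ (Fin (n - 1))) ε₁,
        ∀ z₂ ∈ Metric.ball (0 : EuclideanSpace ℂ (Fin (n - 1))) ε₁,
          Circle.exp θ • F z₁ ≠ F z₂) :
    ∀ ϵ : ℝ, 0 < ϵ → ϵ < Real.pi / k →
      ∃ ε₀ : ℝ, 0 < ε₀ ∧ ε₀ < ε₁ ∧
        Set.InjOn (fun p : EuclideanSpace ℂ (Fin (n - 1)) × ℝ => Circle.exp p.2 • F p.1)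
          (Metric.ball 0 ε₀ ×ˢ Set.Ioo (-(Real.pi / k) + ϵ) (Real.pi / k - ϵ)) :=
  circle_action_canonical_coordinates_stratum_general k n ε₁ hε₁ F hFc hFi hstab δ hδ0 hsep
end

section
/- Let X be a compact metric space, μ a finite Borel measure on X, and (ρ_θ)_{θ ∈ ℝ} a continuous measure-preserving circle action on X. For m ∈ ℤ set V_m := {v ∈ L²(μ) : for every θ, v ∘ ρ_θ = e^{imθ}·v in L²(μ)}. Then the closed linear span of the union ⋃_{m ∈ ℤ} V_m is all of L²(μ); that is, L²(μ) decomposes as the Hilbert space orthogonal direct sum of the subspaces V_m, m ∈ ℤ. -/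
/-! The Koopman operators `U θ g = g ∘ ρ θ` form a strongly continuous, `2π`-periodic
representation of `ℝ` on `L²(μ)` by unitaries, and `V m` is the set of common eigenvectors with
eigenvalue `exp (i m θ)`. Eigenvectors of one unitary for different eigenvalues are orthogonal.
For density, let `g` be orthogonal to every `V m`. The `n`-th Fourier coefficient of the
continuous periodic function `θ ↦ ⟪g, U θ g⟫` is `⟪g, ∫₀^{2π} e^{-inθ} U θ g dθ⟫ / 2π`, and the
integral lies in `V n`, so all coefficients vanish. Hence the function is zero, and
`‖g‖² = ⟪g, U 0 g⟫ = 0`. -/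

open MeasureTheory Complex

theorem LinearIsometry.inner_eq_zero_of_apply_eq_smul {𝕜 E : Type*} [RCLike 𝕜]
    [NormedAddCommGroup E] [InnerProductSpace 𝕜 E] (T : E →ₗᵢ[𝕜] E) {u v : E} {a b : 𝕜}
    (hu : T u = a • u) (hv : T v = b • v) (hab : starRingEnd 𝕜 a * b ≠ 1) :
    inner 𝕜 u v = 0 := by
  have h : inner 𝕜 u v = (starRingEnd 𝕜 a * b) * inner 𝕜 u v :=
    calc inner 𝕜 u v = inner 𝕜 (T u) (T v) := (T.inner_map_map u v).symm
      _ = _ := by rw [hu, hv, inner_smul_left, inner_smul_right, mul_assoc]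
  have h' : (starRingEnd 𝕜 a * b - 1) * inner 𝕜 u v = 0 := by linear_combination -h
  exact (mul_eq_zero.1 h').resolve_left (sub_ne_zero.2 hab)

theorem exists_conj_exp_mul_exp_ne_one {m m' : ℤ} (h : m ≠ m') :
    ∃ θ : ℝ, starRingEnd ℂ (exp (m * θ * I)) * exp (m' * θ * I) ≠ 1 := by
  have hne : (m' : ℂ) - m ≠ 0 := sub_ne_zero.2 (by exact_mod_cast h.symm)
  refine ⟨Real.pi / (m' - m), ?_⟩
  rw [← exp_conj, map_mul, map_mul, conj_I, conj_ofReal, map_intCast, ← exp_add]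
  have harg : (m : ℂ) * ↑(Real.pi / (m' - m)) * -I + m' * ↑(Real.pi / (m' - m)) * I
      = Real.pi * I := by
    push_cast
    field_simp
    ring
  rw [harg, exp_pi_mul_I]
  norm_num

theorem ContinuousMap.eq_zero_of_fourierCoeff_eq_zero {T : ℝ} [Fact (0 < T)]
    {f : C(AddCircle T, ℂ)} (hf : ∀ n, fourierCoeff f n = 0) : f = 0 := by
  apply ContinuousMap.toLp_injective (p := 2) (𝕜 := ℂ) AddCircle.haarAddCircle
  rw [map_zero]
  apply fourierBasis.repr.injective
  ext n
  rw [fourierBasis_repr, fourierCoeff_toLp, hf, map_zero]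
  rfl

section PeriodicRepresentation

local instance : Fact (0 < 2 * Real.pi) := ⟨Real.two_pi_pos⟩

variable {E : Type*} [NormedAddCommGroup E] [InnerProductSpace ℂ E] {U : ℝ → E →L[ℂ] E}

def fourierEigenvectors (U : ℝ → E →L[ℂ] E) (m : ℤ) : Set E :=
  {v | ∀ θ : ℝ, U θ v = exp (m * θ * I) • v}

noncomputable def fourierComponent (U : ℝ → E →L[ℂ] E) (n : ℤ) (g : E) : E :=
  ∫ θ in 0..2 * Real.pi, fourier (-n) (θ : AddCircle (2 * Real.pi)) • U θ g

theorem fourier_coe_apply_two_pi (n : ℤ) (θ : ℝ) :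
    fourier n (θ : AddCircle (2 * Real.pi)) = exp (n * θ * I) := by
  rw [fourier_coe_apply]
  congr 1
  field_simp
  push_cast
  ring

theorem periodic_inner_apply (hper : ∀ θ, U (θ + 2 * Real.pi) = U θ) (g : E) :
    Function.Periodic (fun θ => inner ℂ g (U θ g)) (2 * Real.pi) := fun θ => by
  simp only [hper]

theorem continuous_fourier_smul_apply (hcont : ∀ g, Continuous fun θ => U θ g) (n : ℤ) (g : E) :
    Continuous fun θ : ℝ => fourier n (θ : AddCircle (2 * Real.pi)) • U θ g :=
  ((fourier n).continuous.comp (AddCircle.continuous_mk' _)).smul (hcont g)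

variable [CompleteSpace E]

theorem fourierComponent_mem_fourierEigenvectors (hcont : ∀ g, Continuous fun θ => U θ g)
    (hadd : ∀ s t g, U (s + t) g = U s (U t g)) (hper : ∀ θ, U (θ + 2 * Real.pi) = U θ)
    (n : ℤ) (g : E) :
    fourierComponent U n g ∈ fourierEigenvectors U n := by
  intro s
  set F : ℝ → E := fun θ => fourier (-n) (θ : AddCircle (2 * Real.pi)) • U θ g
  have hF : Continuous F := continuous_fourier_smul_apply hcont (-n) g
  have hFper : Function.Periodic F (2 * Real.pi) := fun θ => by
    simp only [F, hper, AddCircle.coe_add_period]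
  have hshift : ∀ θ, U s (F θ) = exp (n * s * I) • F (θ + s) := fun θ => by
    rw [map_smul, ← hadd, smul_smul, add_comm s θ]
    congr 1
    simp only [fourier_coe_apply_two_pi, ← exp_add]
    congr 1
    push_cast
    ring
  calc U s (fourierComponent U n g)
      = ∫ θ in 0..2 * Real.pi, exp (n * s * I) • F (θ + s) := by
        rw [fourierComponent, ← (U s).intervalIntegral_comp_comm (hF.intervalIntegrable _ _)]
        exact intervalIntegral.integral_congr fun θ _ => hshift θ
    _ = exp (n * s * I) • fourierComponent U n g := by
        rw [intervalIntegral.integral_smul, intervalIntegral.integral_comp_add_right F s,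
          zero_add, add_comm _ s, hFper.intervalIntegral_add_eq s 0, zero_add]
        rfl

theorem inner_fourierComponent (hcont : ∀ g, Continuous fun θ => U θ g)
    (hper : ∀ θ, U (θ + 2 * Real.pi) = U θ) (n : ℤ) (g : E) :
    inner ℂ g (fourierComponent U n g)
      = (2 * Real.pi) • fourierCoeff (periodic_inner_apply hper g).lift n := by
  have hF := continuous_fourier_smul_apply hcont (-n) g
  rw [fourierCoeff_eq_intervalIntegral _ n 0, smul_smul, zero_add,
    mul_one_div_cancel Real.two_pi_pos.ne', one_smul, fourierComponent, ← innerSL_apply_apply,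
    ← (innerSL ℂ g).intervalIntegral_comp_comm (hF.intervalIntegrable _ _)]
  exact intervalIntegral.integral_congr fun θ _ => by
    simp only [innerSL_apply_apply, inner_smul_right, Function.Periodic.lift_coe, smul_eq_mul]

theorem span_fourierEigenvectors_topologicalClosure_eq_top (hcont : ∀ g, Continuous fun θ => U θ g)
    (hadd : ∀ s t g, U (s + t) g = U s (U t g)) (h0 : ∀ g, U 0 g = g)
    (hper : ∀ θ, U (θ + 2 * Real.pi) = U θ) :
    (Submodule.span ℂ (⋃ m : ℤ, fourierEigenvectors U m)).topologicalClosure = ⊤ := by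
  rw [Submodule.topologicalClosure_eq_top_iff, Submodule.eq_bot_iff]
  intro g hg
  let H : C(AddCircle (2 * Real.pi), ℂ) :=
    ⟨(periodic_inner_apply hper g).lift, continuous_quot_lift _ (continuous_const.inner (hcont g))⟩
  have hcoeff : ∀ n, fourierCoeff H n = 0 := fun n => by
    have hmem := Submodule.subset_span (R := ℂ)
      (Set.mem_iUnion.2 ⟨n, fourierComponent_mem_fourierEigenvectors hcont hadd hper n g⟩)
    have h := Submodule.inner_left_of_mem_orthogonal hmem hg
    rw [inner_fourierComponent hcont hper] at h
    exact (smul_eq_zero.1 h).resolve_left Real.two_pi_pos.ne'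
  have hH : H (0 : ℝ) = 0 := by rw [ContinuousMap.eq_zero_of_fourierCoeff_eq_zero hcoeff]; rfl
  have hg0 : inner ℂ g (U 0 g) = 0 := hH
  rwa [h0, inner_self_eq_zero] at hg0

end PeriodicRepresentation

theorem MeasureTheory.Lp.compMeasurePreserving_congr {α β E : Type*} [MeasurableSpace α] [MeasurableSpace β]
    [NormedAddCommGroup E] {p : ENNReal} {μ : Measure α} {ν : Measure β} {f g : α → β}
    (hf : MeasurePreserving f μ ν) (hg : MeasurePreserving g μ ν) (h : f = g) :
    Lp.compMeasurePreserving (E := E) (p := p) f hf = Lp.compMeasurePreserving g hg := by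
  subst h; rfl

theorem MeasureTheory.Lp.continuous_compMeasurePreserving_apply {X E : Type*} [TopologicalSpace X]
    [MeasurableSpace X] [BorelSpace X] [R1Space X] {μ : Measure X} [μ.InnerRegularCompactLTTop]
    [IsLocallyFiniteMeasure μ] [NormedAddCommGroup E] {p : ENNReal} [Fact (1 ≤ p)] (hp : p ≠ ⊤)
    {ρ : ℝ → X → X} (hcont : Continuous fun q : ℝ × X => ρ q.1 q.2)
    (hρ : ∀ θ, MeasurePreserving (ρ θ) μ μ) (g : Lp E p μ) :
    Continuous fun θ => Lp.compMeasurePreserving (ρ θ) (hρ θ) g :=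
  continuous_const.compMeasurePreservingLp (ContinuousMap.curry ⟨_, hcont⟩).continuous hρ hp

/-- For a continuous measure-preserving circle action on a compact
metric space with a finite Borel measure, `L²(μ)` is the Hilbert space orthogonal direct
sum of the Fourier components `V_m`, `m ∈ ℤ`: the `V_m` are pairwise orthogonal and the
closed linear span of their union is all of `L²(μ)`. -/
theorem fourier_decomposition_of_L2
    {X : Type*} [MetricSpace X] [CompactSpace X]
    [MeasurableSpace X] [BorelSpace X]
    (μ : Measure X) [IsFiniteMeasure μ]
    (ρ : ℝ → X → X)
    (hcont : Continuous fun p : ℝ × X => ρ p.1 p.2)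
    (hρ : ∀ θ : ℝ, MeasurePreserving (ρ θ) μ μ)
    (hadd : ∀ θ θ' : ℝ, ρ (θ + θ') = ρ θ ∘ ρ θ')
    (h0 : ρ 0 = id)
    (hper : ∀ θ : ℝ, ρ (θ + 2 * Real.pi) = ρ θ)
    (V : ℤ → Set (Lp ℂ 2 μ))
    (hV : ∀ m : ℤ, V m = {u : Lp ℂ 2 μ | ∀ θ : ℝ,
      Lp.compMeasurePreserving (ρ θ) (hρ θ) u
        = Complex.exp ((m : ℂ) * (θ : ℂ) * Complex.I) • u}) :
    (∀ m m' : ℤ, m ≠ m' → ∀ u ∈ V m, ∀ v ∈ V m', @inner ℂ _ _ u v = 0) ∧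
      (Submodule.span ℂ (⋃ m : ℤ, V m)).topologicalClosure = ⊤ := by
  let U : ℝ → Lp ℂ 2 μ →L[ℂ] Lp ℂ 2 μ := fun θ =>
    (Lp.compMeasurePreservingₗᵢ ℂ (ρ θ) (hρ θ)).toContinuousLinearMap
  refine ⟨fun m m' hm u hu v hv => ?_, ?_⟩
  · obtain ⟨θ, hθ⟩ := exists_conj_exp_mul_exp_ne_one hm
    rw [hV] at hu hv
    exact (Lp.compMeasurePreservingₗᵢ ℂ (ρ θ) (hρ θ)).inner_eq_zero_of_apply_eq_smul
      (hu θ) (hv θ) hθ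
  · rw [show V = fourierEigenvectors U from funext hV]
    refine span_fourierEigenvectors_topologicalClosure_eq_top
      (Lp.continuous_compMeasurePreserving_apply ENNReal.ofNat_ne_top hcont hρ)
      (fun s t g => ?_) (fun g => ?_) (fun θ => ?_)
    · change Lp.compMeasurePreserving (ρ (s + t)) _ g
        = Lp.compMeasurePreserving (ρ s) _ (Lp.compMeasurePreserving (ρ t) _ g)
      rw [← Lp.compMeasurePreserving_comp_apply]
      exact DFunLike.congr_fun (Lp.compMeasurePreserving_congr _ _ (by rw [add_comm, hadd])) g
    · change Lp.compMeasurePreserving (ρ 0) _ g = g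
      rw [Lp.compMeasurePreserving_congr _ (MeasurePreserving.id μ) h0,
        Lp.compMeasurePreserving_id_apply]
    · ext1 g
      exact DFunLike.congr_fun (Lp.compMeasurePreserving_congr _ _ (hper θ)) g
end

section
/- Fix integers n ≥ 1 and m ≥ 0. For each k ∈ ℕ let u_k : S³ → ℂ be the restriction to the unit sphere S³ = {(z₁, z₂) ∈ ℂ² : |z₁|² + |z₂|² = 1} of the holomorphic polynomial (z₁, z₂) ↦ z₁^{m+nk} z₂^k. Then: (1) the family {u_k : k ∈ ℕ} is linearly independent in the space of complex-valued functions on S³; (2) for every k ∈ ℕ and every θ ∈ ℝ, u_k(e^{iθ} z₁, e^{−inθ} z₂) = e^{imθ} u_k(z₁, z₂) for all (z₁, z₂) ∈ S³. Consequently, the complex vector space of restrictions to S³ of holomorphic polynomials p on ℂ² satisfying p(e^{iθ} z₁, e^{−inθ} z₂) = e^{imθ} p(z₁, z₂) for all θ is infinite-dimensional. -/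
/-!
On the sphere, `u k = z₁ ^ m * (z₁ ^ n * z₂) ^ k`, so a vanishing linear combination `∑ cₖ u k`
says that the one-variable polynomial `∑ cₖ Xᵏ` vanishes at every value of `z₁ ^ n * z₂` at a
point with `z₁ ≠ 0`. These values fill a whole circle, so the polynomial is zero. Each `u k` is
the restriction of an equivariant monomial, so infinitely many independent functions lie in the
span of any spanning set of the Fourier component, which is therefore not finitely spanned.
-/

open Polynomial

section PowersOfAFunction

variable {K S : Type*} [Field K]

noncomputable def weightedEval (ψ φ : S → K) : K[X] →ₗ[K] S → K :=
  LinearMap.pi fun z => ψ z • leval (φ z)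

theorem weightedEval_apply (ψ φ : S → K) (p : K[X]) (z : S) :
    weightedEval ψ φ p z = ψ z * p.eval (φ z) := rfl

theorem weightedEval_injective {ψ φ : S → K} (h : (φ '' {z | ψ z ≠ 0}).Infinite) :
    Function.Injective (weightedEval ψ φ) := by
  rw [← LinearMap.ker_eq_bot, LinearMap.ker_eq_bot']
  intro p hp
  refine eq_zero_of_infinite_isRoot p (h.mono ?_)
  rintro _ ⟨z, hz, rfl⟩
  exact (mul_eq_zero.mp (congrFun hp z)).resolve_left hz

theorem linearIndependent_mul_pow {ψ φ : S → K} (h : (φ '' {z | ψ z ≠ 0}).Infinite) :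
    LinearIndependent K fun (k : ℕ) (z : S) => ψ z * φ z ^ k := by
  have := (basisMonomials K).linearIndependent.map' _
    (LinearMap.ker_eq_bot.mpr (weightedEval_injective h))
  have hcomp : weightedEval ψ φ ∘ basisMonomials K = fun (k : ℕ) (z : S) => ψ z * φ z ^ k := by
    ext k z
    simp [weightedEval_apply]
  rwa [← hcomp]

end PowersOfAFunction

theorem Complex.infinite_sphere_zero {r : ℝ} (hr : 0 < r) : (Metric.sphere (0 : ℂ) r).Infinite := by
  refine (isPreconnected_sphere (by simp [Complex.rank_real_complex]) 0 r).infinite_of_nontrivial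
    ⟨r, by simp [hr.le], -r, by simp [hr.le], by exact_mod_cast ne_of_gt (neg_lt_self hr)⟩

theorem exp_mul_pow_mul_exp_neg_mul_pow (n m k : ℕ) (θ : ℝ) (a b : ℂ) :
    (Complex.exp (θ * Complex.I) * a) ^ (m + n * k) *
      (Complex.exp (-(n * θ) * Complex.I) * b) ^ k
    = Complex.exp (m * θ * Complex.I) * (a ^ (m + n * k) * b ^ k) := by
  set e := Complex.exp (θ * Complex.I)
  have he : e ≠ 0 := Complex.exp_ne_zero _
  have h1 : Complex.exp (-(n * θ) * Complex.I) = (e ^ n)⁻¹ := by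
    rw [← Complex.exp_nat_mul, ← Complex.exp_neg]; ring_nf
  have h2 : Complex.exp (m * θ * Complex.I) = e ^ m := by
    rw [← Complex.exp_nat_mul]; ring_nf
  rw [h1, h2, mul_pow, mul_pow, pow_add e, pow_mul, inv_pow]
  field_simp

theorem infinite_image_unitSphere (n m : ℕ) :
    ((fun z : {p : ℂ × ℂ | ‖p.1‖ ^ 2 + ‖p.2‖ ^ 2 = 1} => z.1.1 ^ n * z.1.2) ''
      {z | z.1.1 ^ m ≠ 0}).Infinite := by
  set c : ℝ := √2⁻¹
  have hc : 0 < c := by positivity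
  have hc2 : c ^ 2 = 2⁻¹ := Real.sq_sqrt (by norm_num)
  refine (Complex.infinite_sphere_zero (pow_pos hc (n + 1))).mono ?_
  intro w hw
  rw [mem_sphere_zero_iff_norm] at hw
  refine ⟨⟨((c : ℂ), w / (c : ℂ) ^ n), ?_⟩, by simp [hc.ne'],
    by dsimp only; exact mul_div_cancel₀ w (pow_ne_zero n (Complex.ofReal_ne_zero.mpr hc.ne'))⟩
  show ‖(c : ℂ)‖ ^ 2 + ‖w / (c : ℂ) ^ n‖ ^ 2 = 1
  rw [norm_div, norm_pow, hw, Complex.norm_real, Real.norm_of_nonneg hc.le, pow_succ' c n,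
    mul_div_cancel_right₀ _ (pow_ne_zero n hc.ne'), hc2]
  norm_num

theorem nontransversal_fourier_component_infinite_dimensional_general
    (n m : ℕ)
    (Sph : Set (ℂ × ℂ))
    (hSph : Sph = {p : ℂ × ℂ | ‖p.1‖ ^ 2 + ‖p.2‖ ^ 2 = 1})
    (u : ℕ → (Sph → ℂ))
    (hu : ∀ (k : ℕ) (z : Sph), u k z = (z : ℂ × ℂ).1 ^ (m + n * k) * (z : ℂ × ℂ).2 ^ k) :
    LinearIndependent ℂ u ∧
    (∀ (k : ℕ) (θ : ℝ) (z w : Sph),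
      (w : ℂ × ℂ).1 = Complex.exp ((θ : ℂ) * Complex.I) * (z : ℂ × ℂ).1 →
      (w : ℂ × ℂ).2 = Complex.exp (-((n : ℂ) * (θ : ℂ)) * Complex.I) * (z : ℂ × ℂ).2 →
      u k w = Complex.exp ((m : ℂ) * (θ : ℂ) * Complex.I) * u k z) ∧
    ¬ ∃ s : Finset (Sph → ℂ),
        {f : Sph → ℂ | ∃ p : MvPolynomial (Fin 2) ℂ,
          (∀ (θ : ℝ) (v : ℂ × ℂ),
            MvPolynomial.eval
                ![Complex.exp ((θ : ℂ) * Complex.I) * v.1,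
                  Complex.exp (-((n : ℂ) * (θ : ℂ)) * Complex.I) * v.2] p
              = Complex.exp ((m : ℂ) * (θ : ℂ) * Complex.I)
                  * MvPolynomial.eval ![v.1, v.2] p) ∧
          ∀ z : Sph, f z = MvPolynomial.eval ![(z : ℂ × ℂ).1, (z : ℂ × ℂ).2] p}
        ⊆ (Submodule.span ℂ (s : Set (Sph → ℂ)) : Set (Sph → ℂ)) := by
  subst hSph
  have hu' : u = fun k z => z.1.1 ^ m * (z.1.1 ^ n * z.1.2) ^ k := by
    ext k z
    rw [hu]
    ring
  have hli : LinearIndependent ℂ u :=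
    hu' ▸ linearIndependent_mul_pow (infinite_image_unitSphere n m)
  refine ⟨hli, fun k θ z w h1 h2 => ?_, ?_⟩
  · rw [hu, hu, h1, h2, exp_mul_pow_mul_exp_neg_mul_pow]
  rintro ⟨s, hs⟩
  refine Finite.false (hli.finite_of_le_span_finite u s (Set.range_subset_iff.2 fun k => hs ?_))
  refine ⟨.X 0 ^ (m + n * k) * .X 1 ^ k, fun θ v => ?_, fun z => ?_⟩
  · simpa using exp_mul_pow_mul_exp_neg_mul_pow n m k θ v.1 v.2
  · simp [hu]

/-- On the sphere `S³ ⊆ ℂ²` with the non-transversal circle action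
`e^{iθ}∘(z₁,z₂) = (e^{iθ}z₁, e^{-inθ}z₂)`, the restrictions `u_k` of the monomials
`z₁^{m+nk} z₂^k` are linearly independent, each satisfies the `m`-th Fourier
equivariance, and consequently the space of restrictions to `S³` of equivariant
holomorphic polynomials is infinite-dimensional. -/
theorem nontransversal_fourier_component_infinite_dimensional
    (n m : ℕ) (hn : 1 ≤ n)
    (Sph : Set (ℂ × ℂ))
    (hSph : Sph = {p : ℂ × ℂ | ‖p.1‖ ^ 2 + ‖p.2‖ ^ 2 = 1})
    (u : ℕ → (Sph → ℂ))
    (hu : ∀ (k : ℕ) (z : Sph), u k z = (z : ℂ × ℂ).1 ^ (m + n * k) * (z : ℂ × ℂ).2 ^ k) :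
    LinearIndependent ℂ u ∧
    (∀ (k : ℕ) (θ : ℝ) (z w : Sph),
      (w : ℂ × ℂ).1 = Complex.exp ((θ : ℂ) * Complex.I) * (z : ℂ × ℂ).1 →
      (w : ℂ × ℂ).2 = Complex.exp (-((n : ℂ) * (θ : ℂ)) * Complex.I) * (z : ℂ × ℂ).2 →
      u k w = Complex.exp ((m : ℂ) * (θ : ℂ) * Complex.I) * u k z) ∧
    ¬ ∃ s : Finset (Sph → ℂ),
        {f : Sph → ℂ | ∃ p : MvPolynomial (Fin 2) ℂ,
          (∀ (θ : ℝ) (v : ℂ × ℂ),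
            MvPolynomial.eval
                ![Complex.exp ((θ : ℂ) * Complex.I) * v.1,
                  Complex.exp (-((n : ℂ) * (θ : ℂ)) * Complex.I) * v.2] p
              = Complex.exp ((m : ℂ) * (θ : ℂ) * Complex.I)
                  * MvPolynomial.eval ![v.1, v.2] p) ∧
          ∀ z : Sph, f z = MvPolynomial.eval ![(z : ℂ × ℂ).1, (z : ℂ × ℂ).2] p}
        ⊆ (Submodule.span ℂ (s : Set (Sph → ℂ)) : Set (Sph → ℂ)) :=
  nontransversal_fourier_component_infinite_dimensional_general n m Sph hSph u hu
end
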